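/- arXiv:1308.4018 — 3 statements merged into one kernel-verified Lean document; each statement's English description precedes it below -/
import Mathlib

section
/- Let (Ω, μ) be a σ-finite measure space, let m ≤ n, and let u_1, …, u_m : Ω → ℝ^n be measurable functions such that {u_1(x), …, u_m(x)} is an orthonormal subset of ℝ^n for every x ∈ Ω. Then there exist measurable functions u_{m+1}, …, u_n : Ω → ℝ^n such that {u_1(x), …, u_n(x)} is an orthonormal basis of ℝ^n for every x ∈ Ω. -/
open Matrix MeasureTheory

private lemma dotProduct_sum' {N ι : Type*} [Fintype N] (s : Finset ι) (v : N → ℝ)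
    (f : ι → N → ℝ) : v ⬝ᵥ (∑ i ∈ s, f i) = ∑ i ∈ s, v ⬝ᵥ f i := by
  simp only [dotProduct, Finset.sum_apply, Finset.mul_sum]
  rw [Finset.sum_comm]

private lemma step_lemma {Ω : Type*} [MeasurableSpace Ω] (n m : ℕ) (hmn : m < n)
    (u : Fin m → Ω → (Fin n → ℝ))
    (humeas : ∀ (i : Fin m) (k : Fin n), Measurable fun x => u i x k)
    (huorth : ∀ x, ∀ i j : Fin m, u i x ⬝ᵥ u j x = if i = j then (1 : ℝ) else 0) :
    ∃ w : Ω → (Fin n → ℝ), (∀ k, Measurable fun x => w x k) ∧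
      ∀ x, (∀ i, u i x ⬝ᵥ w x = 0) ∧ w x ⬝ᵥ w x = 1 := by
  classical
  set W : Fin n → Ω → (Fin n → ℝ) := fun k x => Pi.single k 1 - ∑ i, u i x k • u i x with hW
  have hWmeas : ∀ k k', Measurable fun x => W k x k' := by
    intro k k'
    simp only [hW, Pi.sub_apply, Finset.sum_apply, Pi.smul_apply, smul_eq_mul]
    exact measurable_const.sub (Finset.measurable_sum _ fun i _ => (humeas i k).mul (humeas i k'))
  have hWu : ∀ x (k : Fin n) i, u i x ⬝ᵥ W k x = 0 := by
    intro x k i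
    simp only [hW]
    rw [dotProduct_sub, dotProduct_sum']
    simp [dotProduct_smul, huorth x, dotProduct_single, mul_comm]
  have hex : ∀ x, ∃ j : ℕ, ∃ hj : j < n, W ⟨j, hj⟩ x ≠ 0 := by
    intro x
    by_contra h
    push_neg at h
    have hsp : ∀ k : Fin n,
        (Pi.single k 1 : Fin n → ℝ) ∈ Submodule.span ℝ (Set.range fun i => u i x) := by
      intro k
      have h0 : W k x = 0 := h k.1 k.2
      have heq : (Pi.single k 1 : Fin n → ℝ) = ∑ i, u i x k • u i x := by
        have := sub_eq_zero.mp h0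
        simpa using this
      rw [heq]
      exact Submodule.sum_mem _ fun i _ =>
        Submodule.smul_mem _ _ (Submodule.subset_span ⟨i, rfl⟩)
    have htop : Submodule.span ℝ (Set.range fun i => u i x) = ⊤ := by
      rw [eq_top_iff]
      rintro y -
      have hy : y = ∑ k : Fin n, y k • (Pi.single k 1 : Fin n → ℝ) := by
        funext j
        simp [Pi.single_apply, Finset.sum_apply, mul_comm]
      rw [hy]
      exact Submodule.sum_mem _ fun k _ => Submodule.smul_mem _ _ (hsp k)
    have h1 : (Set.range fun i => u i x).finrank ℝ ≤ m := by
      simpa using finrank_range_le_card (fun i => u i x)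
    have h2 : (Set.range fun i => u i x).finrank ℝ = n := by
      rw [Set.finrank, htop, finrank_top]
      simp [Module.finrank_fin_fun]
    omega
  set A : Fin n → Set Ω := fun k =>
    {x | W k x ≠ 0} ∩ ⋂ (j : Fin n) (_ : j < k), {x | W j x = 0} with hA
  have hne_meas : ∀ k : Fin n, MeasurableSet {x | W k x ≠ 0} := by
    intro k
    have : {x | W k x ≠ 0} = ⋃ k', {x | W k x k' ≠ 0} := by
      ext x; simp [Function.ne_iff]
    rw [this]
    exact MeasurableSet.iUnion fun k' => (hWmeas k k') (measurableSet_singleton 0).compl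
  have heq_meas : ∀ k : Fin n, MeasurableSet {x | W k x = 0} := by
    intro k
    have : {x | W k x = 0} = {x | W k x ≠ 0}ᶜ := by ext x; simp
    rw [this]; exact (hne_meas k).compl
  have hAmeas : ∀ k, MeasurableSet (A k) := fun k =>
    (hne_meas k).inter (MeasurableSet.iInter fun j => MeasurableSet.iInter fun _ => heq_meas j)
  refine ⟨fun x => ∑ j : Fin n,
      Set.indicator (A j) (fun x => (Real.sqrt (W j x ⬝ᵥ W j x))⁻¹ • W j x) x, ?_, ?_⟩
  · intro k
    simp only [Finset.sum_apply]
    refine Finset.measurable_sum _ fun j _ => ?_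
    have : (fun x => Set.indicator (A j)
        (fun x => (Real.sqrt (W j x ⬝ᵥ W j x))⁻¹ • W j x) x k)
        = fun x => Set.indicator (A j)
          (fun x => (Real.sqrt (W j x ⬝ᵥ W j x))⁻¹ * W j x k) x := by
      funext x
      by_cases hx : x ∈ A j <;> simp [Set.indicator, hx]
    rw [this]
    refine Measurable.indicator ?_ (hAmeas j)
    have hd : Measurable fun x => W j x ⬝ᵥ W j x := by
      simp only [dotProduct]
      exact Finset.measurable_sum _ fun k' _ => (hWmeas j k').mul (hWmeas j k')
    exact ((Real.continuous_sqrt.measurable.comp hd).inv).mul (hWmeas j k)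
  · intro x
    obtain ⟨hlt, hne⟩ := Nat.find_spec (hex x)
    set j0 : Fin n := ⟨Nat.find (hex x), hlt⟩ with hj0
    have hmin : ∀ j : Fin n, j < j0 → W j x = 0 := by
      intro j hj
      have := Nat.find_min (hex x) (by exact_mod_cast hj)
      push_neg at this
      simpa using this j.2
    have hmem : x ∈ A j0 := ⟨hne, by simp only [Set.mem_iInter]; exact fun j hj => hmin j hj⟩
    have hnot : ∀ j : Fin n, j ≠ j0 → x ∉ A j := by
      intro j hj hxj
      rcases lt_or_gt_of_ne hj with h | h
      · exact hxj.1 (hmin j h)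
      · have : W j0 x = 0 := by
          have := hxj.2
          simp only [Set.mem_iInter] at this
          exact this j0 h
        exact hne this
    have hcol : (∑ j : Fin n,
        Set.indicator (A j) (fun x => (Real.sqrt (W j x ⬝ᵥ W j x))⁻¹ • W j x) x)
        = (Real.sqrt (W j0 x ⬝ᵥ W j0 x))⁻¹ • W j0 x := by
      rw [Finset.sum_eq_single j0]
      · rw [Set.indicator_of_mem hmem]
      · intro j _ hj
        rw [Set.indicator_of_notMem (hnot j hj)]
      · simp
    simp only [hcol]
    set d : ℝ := W j0 x ⬝ᵥ W j0 x with hd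
    have hdnonneg : 0 ≤ d := Finset.sum_nonneg fun _ _ => mul_self_nonneg _
    have hdne : d ≠ 0 := fun h0 => hne (dotProduct_self_eq_zero.mp h0)
    constructor
    · intro i
      rw [dotProduct_smul, hWu x j0 i]
      simp
    · rw [smul_dotProduct, dotProduct_smul, ← hd]
      rw [smul_eq_mul, smul_eq_mul, ← mul_assoc, ← mul_inv]
      rw [Real.mul_self_sqrt hdnonneg]
      exact inv_mul_cancel₀ hdne

private lemma ext_aux {Ω : Type*} [MeasurableSpace Ω] (n : ℕ) :
    ∀ (d m : ℕ), n - m = d → ∀ (hmn : m ≤ n) (u : Fin m → Ω → (Fin n → ℝ)),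
      (∀ (i : Fin m) (k : Fin n), Measurable fun x => u i x k) →
      (∀ x, ∀ i j : Fin m, u i x ⬝ᵥ u j x = if i = j then (1 : ℝ) else 0) →
      ∃ v : Fin n → Ω → (Fin n → ℝ),
        (∀ (i : Fin n) (k : Fin n), Measurable fun x => v i x k) ∧
        (∀ i : Fin m, v (Fin.castLE hmn i) = u i) ∧
        (∀ x, ∀ i j : Fin n, v i x ⬝ᵥ v j x = if i = j then (1 : ℝ) else 0) := by
  intro d
  induction d with
  | zero =>
    intro m hd hmn u humeas huorth
    have hm : m = n := by omega
    subst hm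
    exact ⟨u, humeas, fun i => rfl, fun x => huorth x⟩
  | succ d ih =>
    intro m hd hmn u humeas huorth
    have hm : m < n := by omega
    obtain ⟨w, hwmeas, hw⟩ := step_lemma n m hm u humeas huorth
    set u' : Fin (m + 1) → Ω → Fin n → ℝ := Fin.snoc u w with hu'
    have humeas' : ∀ (i : Fin (m + 1)) (k : Fin n), Measurable fun x => u' i x k := by
      intro i k
      refine Fin.lastCases ?_ ?_ i
      · simpa [hu'] using hwmeas k
      · intro i'
        simpa [hu'] using humeas i' k
    have huorth' : ∀ x, ∀ i j : Fin (m + 1),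
        u' i x ⬝ᵥ u' j x = if i = j then (1 : ℝ) else 0 := by
      intro x i j
      refine Fin.lastCases ?_ ?_ i
      · refine Fin.lastCases ?_ ?_ j
        · simp [hu', (hw x).2]
        · intro j'
          simp only [hu', Fin.snoc_last, Fin.snoc_castSucc]
          rw [dotProduct_comm, (hw x).1 j']
          simp [(Fin.castSucc_lt_last j').ne.symm, Fin.ne_of_gt (Fin.castSucc_lt_last j')]
      · intro i'
        refine Fin.lastCases ?_ ?_ j
        · simp only [hu', Fin.snoc_last, Fin.snoc_castSucc]
          rw [(hw x).1 i']
          simp [Fin.ne_of_lt (Fin.castSucc_lt_last i')]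
        · intro j'
          simp only [hu', Fin.snoc_castSucc, huorth x i' j', Fin.castSucc_inj]
    obtain ⟨v, hvmeas, hvcast, hvorth⟩ :=
      ih (m + 1) (by omega) (by omega) u' humeas' huorth'
    refine ⟨v, hvmeas, ?_, hvorth⟩
    intro i
    have h1 : v (Fin.castLE hmn i) = u' (Fin.castSucc i) := hvcast (Fin.castSucc i)
    rw [h1, hu', Fin.snoc_castSucc]

/-- A measurable orthonormal family `u_1, …, u_m : Ω → ℝ^n` can be enlarged by
measurable functions `u_{m+1}, …, u_n` to a pointwise orthonormal basis of `ℝ^n`. -/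
theorem measurable_extension_to_orthonormal_basis
    {Ω : Type*} [MeasurableSpace Ω] (μ : Measure Ω) [SigmaFinite μ]
    (n m : ℕ) (hmn : m ≤ n) (u : Fin m → Ω → (Fin n → ℝ))
    (humeas : ∀ (i : Fin m) (k : Fin n), Measurable fun x => u i x k)
    (huorth : ∀ x, ∀ i j : Fin m, u i x ⬝ᵥ u j x = if i = j then (1 : ℝ) else 0) :
    ∃ v : Fin n → Ω → (Fin n → ℝ),
      (∀ (i : Fin n) (k : Fin n), Measurable fun x => v i x k) ∧
      (∀ i : Fin m, v (Fin.castLE hmn i) = u i) ∧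
      (∀ x, (∀ i j : Fin n, v i x ⬝ᵥ v j x = if i = j then (1 : ℝ) else 0) ∧
        Submodule.span ℝ (Set.range fun i => v i x) = ⊤) := by
  classical
  obtain ⟨v, hvmeas, hvcast, hvorth⟩ := ext_aux n (n - m) m rfl hmn u humeas huorth
  refine ⟨v, hvmeas, hvcast, fun x => ⟨hvorth x, ?_⟩⟩
  set M : Matrix (Fin n) (Fin n) ℝ := Matrix.of fun i j => v i x j with hM
  have hM1 : M * Mᵀ = 1 := by
    ext i j
    simpa [hM, Matrix.mul_apply, Matrix.one_apply, dotProduct] using hvorth x i j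
  have hM2 : Mᵀ * M = 1 := mul_eq_one_comm.mp hM1
  rw [eq_top_iff]
  rintro y -
  have hy : (y ᵥ* Mᵀ) ᵥ* M = y := by
    rw [vecMul_vecMul, hM2, vecMul_one]
  have hsum : (y ᵥ* Mᵀ) ᵥ* M = ∑ i : Fin n, (y ᵥ* Mᵀ) i • v i x := by
    funext j
    simp [vecMul, dotProduct, hM, Finset.sum_apply]
  rw [← hy, hsum]
  exact Submodule.sum_mem _ fun i _ =>
    Submodule.smul_mem _ _ (Submodule.subset_span ⟨i, rfl⟩)
end

section
/- Let (Ω, μ) be a σ-finite measure space and let A : Ω → ℝ^{n×n} be a random matrix such that A(x) is symmetric and has rank at most one for every x ∈ Ω. Then there exist measurable functions λ_1, …, λ_n : Ω → ℝ with λ_1(x) ≤ ⋯ ≤ λ_n(x) for every x, and measurable functions u_1, …, u_n : Ω → ℝ^n, such that for every x ∈ Ω the set {u_1(x), …, u_n(x)} is an orthonormal basis of ℝ^n and A(x) u_j(x) = λ_j(x) u_j(x) for every j = 1, …, n. -/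
/-!
A nonzero symmetric matrix `A` of rank at most one is `t • v vᵀ` with `t = trace A` and `v` a unit
vector: indeed `A j j • A = A j (A j)ᵀ` for every `j`, so `v` is the normalised row `A j` for any
`j` with `A j j ≠ 0`. The Householder reflection exchanging `v` with a coordinate vector `eᵢ` is
a symmetric orthogonal matrix whose rows are eigenvectors of `A`: row `i` is `v`, with eigenvalue
`t`, and the other rows are orthogonal to `v`, hence in the kernel. Putting `i` first when `t < 0`
and last otherwise orders the eigenvalues.

Every choice is a finite measurable case distinction: `j` is the first index with `A j j ≠ 0`,
and the sign of `v` is fixed by `vᵢ ≤ 0`, which keeps `v` away from `eᵢ`, where the reflection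
degenerates.
-/

open Matrix MeasureTheory

namespace Matrix

variable {K ι : Type*} [Field K] [Fintype ι] [DecidableEq ι]

theorem exists_eq_vecMulVec_of_rank_le_one {κ : Type*} (A : Matrix κ ι K) (h : A.rank ≤ 1) :
    ∃ (v : κ → K) (c : ι → K), A = vecMulVec v c := by
  obtain ⟨v, hv⟩ := (Submodule.finrank_le_one_iff_isPrincipal _).1 h
  choose c hc using fun j => Submodule.mem_span_singleton.1
    (hv ▸ LinearMap.mem_range_self A.mulVecLin (Pi.single j 1))
  refine ⟨v, c, ext fun i j => ?_⟩
  simpa [mulVec_single, vecMulVec_apply, mul_comm] using (congrFun (hc j) i).symm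

section RankOneSymm

variable {A : Matrix ι ι K}

theorem IsSymm.diag_smul_eq_vecMulVec (hA : A.IsSymm) (hr : A.rank ≤ 1) (j : ι) :
    A j j • A = vecMulVec (A j) (A j) := by
  obtain ⟨v, c, rfl⟩ := exists_eq_vecMulVec_of_rank_le_one A hr
  have hvc : ∀ i, v i * c j = v j * c i := fun i => by
    simpa [vecMulVec_apply] using hA.apply j i
  ext i k
  simp only [smul_apply, vecMulVec_apply, smul_eq_mul]
  linear_combination (v j * c k) * hvc i

theorem IsSymm.diag_mul_trace (hA : A.IsSymm) (hr : A.rank ≤ 1) (j : ι) :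
    A j j * A.trace = A j ⬝ᵥ A j := by
  rw [← trace_vecMulVec, ← hA.diag_smul_eq_vecMulVec hr j, trace_smul, smul_eq_mul]

theorem IsSymm.diag_smul_mulVec (hA : A.IsSymm) (hr : A.rank ≤ 1) (j : ι) (u : ι → K) :
    A j j • (A *ᵥ u) = (A j ⬝ᵥ u) • A j := by
  rw [← smul_mulVec, hA.diag_smul_eq_vecMulVec hr j, vecMulVec_mulVec, op_smul_eq_smul]

theorem IsSymm.mulVec_row (hA : A.IsSymm) (hr : A.rank ≤ 1) {j : ι} (hj : A j j ≠ 0) :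
    A *ᵥ A j = A.trace • A j := by
  apply smul_right_injective _ hj
  simp only [hA.diag_smul_mulVec hr j, ← hA.diag_mul_trace hr j, mul_smul]

theorem IsSymm.mulVec_eq_zero_of_dotProduct_row (hA : A.IsSymm) (hr : A.rank ≤ 1) {j : ι}
    (hj : A j j ≠ 0) {u : ι → K} (hu : A j ⬝ᵥ u = 0) : A *ᵥ u = 0 := by
  apply smul_right_injective _ hj
  simp only [hA.diag_smul_mulVec hr j, hu, zero_smul, smul_zero]

theorem IsSymm.eq_zero_of_diag_eq_zero [LinearOrder K] [IsStrictOrderedRing K]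
    (hA : A.IsSymm) (hr : A.rank ≤ 1) (h : ∀ j, A j j = 0) : A = 0 :=
  Matrix.ext fun j => congrFun <|
    dotProduct_self_eq_zero.1 (by rw [← hA.diag_mul_trace hr j, h j, zero_mul])

end RankOneSymm

noncomputable def householder (q : ι → K) : Matrix ι ι K :=
  1 - (2 / (q ⬝ᵥ q)) • vecMulVec q q

theorem householder_transpose (q : ι → K) : (householder q)ᵀ = householder q := by
  simp [householder, transpose_vecMulVec]

theorem householder_apply (q : ι → K) (i : ι) :
    householder q i = Pi.single i 1 - (2 / (q ⬝ᵥ q) * q i) • q := by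
  ext k
  simp [householder, vecMulVec_apply, one_apply, Pi.single_apply, eq_comm, mul_assoc]

theorem householder_mul_self {q : ι → K} (hq : q ⬝ᵥ q ≠ 0) :
    householder q * householder q = 1 := by
  have hsq : vecMulVec q q * vecMulVec q q = (q ⬝ᵥ q) • vecMulVec q q := by
    rw [vecMulVec_mul_vecMulVec, vecMulVec_smul]
  simp only [householder, sub_mul, mul_sub, Matrix.smul_mul, Matrix.mul_smul, one_mul, mul_one,
    hsq, smul_smul]
  have : 2 / q ⬝ᵥ q * (2 / q ⬝ᵥ q * q ⬝ᵥ q) = 2 / q ⬝ᵥ q + 2 / q ⬝ᵥ q := by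
    field_simp
    ring
  rw [this, add_smul]
  abel

theorem householder_dotProduct_householder {q : ι → K} (hq : q ⬝ᵥ q ≠ 0) (i j : ι) :
    householder q i ⬝ᵥ householder q j = (1 : Matrix ι ι K) i j := by
  rw [← householder_mul_self hq, mul_apply']
  congr 1
  ext k
  rw [← householder_transpose q, transpose_apply, householder_transpose]

theorem span_range_householder {q : ι → K} (hq : q ⬝ᵥ q ≠ 0) :
    Submodule.span K (Set.range (householder q)) = ⊤ := by
  have hrank := rank_of_isUnit _ ⟨⟨_, _, householder_mul_self hq, householder_mul_self hq⟩, rfl⟩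
  rw [rank_eq_finrank_span_row, ← Module.finrank_fintype_fun_eq_card K] at hrank
  exact Submodule.eq_top_of_finrank_eq hrank

theorem dotProduct_self_sub_single {v : ι → K} (hv : v ⬝ᵥ v = 1) (i : ι) :
    (v - Pi.single i 1) ⬝ᵥ (v - Pi.single i 1) = 2 * (1 - v i) := by
  simp only [dotProduct_sub, sub_dotProduct, hv, dotProduct_single, single_dotProduct,
    Pi.sub_apply, Pi.single_eq_same]
  ring

section Reflection

variable [NeZero (2 : K)] {v : ι → K} {i : ι}

theorem dotProduct_self_sub_single_ne_zero (hv : v ⬝ᵥ v = 1) (hvi : v i ≠ 1) :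
    (v - Pi.single i 1) ⬝ᵥ (v - Pi.single i 1) ≠ 0 := by
  rw [dotProduct_self_sub_single hv]
  exact mul_ne_zero two_ne_zero (sub_ne_zero.2 hvi.symm)

theorem householder_sub_single_apply_self (hv : v ⬝ᵥ v = 1) (hvi : v i ≠ 1) :
    householder (v - Pi.single i 1) i = v := by
  have hcoef :
      2 / ((v - Pi.single i 1) ⬝ᵥ (v - Pi.single i 1)) * (v - Pi.single i 1 : ι → K) i = -1 := by
    rw [dotProduct_self_sub_single hv, Pi.sub_apply, Pi.single_eq_same]
    field_simp [sub_ne_zero.2 hvi.symm]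
    ring
  rw [householder_apply, hcoef, neg_one_smul, sub_neg_eq_add, add_sub_cancel]

theorem mulVec_householder_sub_single {B : Matrix ι ι K} {t : K} (hv : v ⬝ᵥ v = 1)
    (hvi : v i ≠ 1) (heig : B *ᵥ v = t • v) (hker : ∀ u, v ⬝ᵥ u = 0 → B *ᵥ u = 0) (k : ι) :
    B *ᵥ householder (v - Pi.single i 1) k =
      (Pi.single i t : ι → K) k • householder (v - Pi.single i 1) k := by
  by_cases hk : k = i
  · subst hk
    rw [householder_sub_single_apply_self hv hvi, heig, Pi.single_eq_same]
  · rw [Pi.single_eq_of_ne hk, zero_smul]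
    apply hker
    have h := householder_dotProduct_householder (dotProduct_self_sub_single_ne_zero hv hvi) i k
    rwa [householder_sub_single_apply_self hv hvi, one_apply_ne (Ne.symm hk)] at h

end Reflection

end Matrix

section Real

variable {ι : Type*} [Fintype ι]

noncomputable def normalizeNonposAt (i : ι) (w : ι → ℝ) : ι → ℝ :=
  ((if 0 < w i then -1 else 1) / √(w ⬝ᵥ w)) • w

theorem normalizeNonposAt_apply_self_nonpos (i : ι) (w : ι → ℝ) :
    normalizeNonposAt i w i ≤ 0 := by
  simp only [normalizeNonposAt, Pi.smul_apply, smul_eq_mul]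
  split_ifs with h
  · exact mul_nonpos_of_nonpos_of_nonneg
      (div_nonpos_of_nonpos_of_nonneg (by norm_num) (Real.sqrt_nonneg _)) h.le
  · exact mul_nonpos_of_nonneg_of_nonpos (by positivity) (not_lt.1 h)

theorem normalizeNonposAt_dotProduct_self {w : ι → ℝ} (hw : w ≠ 0) (i : ι) :
    normalizeNonposAt i w ⬝ᵥ normalizeNonposAt i w = 1 := by
  have hpos : 0 < w ⬝ᵥ w := dotProduct_self_star_pos_iff.2 hw
  simp only [normalizeNonposAt, smul_dotProduct, dotProduct_smul, smul_eq_mul]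
  rw [← mul_assoc, ← sq, div_pow, Real.sq_sqrt hpos.le]
  split_ifs <;> field_simp

theorem measurable_normalizeNonposAt (i : ι) : Measurable (normalizeNonposAt i) := by
  have hsign : Measurable fun w : ι → ℝ => if 0 < w i then (-1 : ℝ) else 1 :=
    Measurable.ite (measurableSet_lt measurable_const (measurable_pi_apply i)) measurable_const
      measurable_const
  have hdot : Measurable fun w : ι → ℝ => w ⬝ᵥ w := by simp only [dotProduct]; fun_prop
  exact ((hsign.div hdot.sqrt).smul measurable_id :)

variable [DecidableEq ι]

noncomputable def householderToward (i : ι) (w : ι → ℝ) : Matrix ι ι ℝ :=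
  householder (normalizeNonposAt i w - Pi.single i 1)

theorem normalizeNonposAt_sub_single_dotProduct_self_ne_zero (i : ι) (w : ι → ℝ) :
    (normalizeNonposAt i w - Pi.single i 1) ⬝ᵥ (normalizeNonposAt i w - Pi.single i 1) ≠ 0 := by
  intro h
  have hi := congrFun (dotProduct_self_eq_zero.1 h) i
  simp only [Pi.sub_apply, Pi.single_eq_same, Pi.zero_apply, sub_eq_zero] at hi
  linarith [normalizeNonposAt_apply_self_nonpos i w]

theorem householderToward_dotProduct (i : ι) (w : ι → ℝ) (k l : ι) :
    householderToward i w k ⬝ᵥ householderToward i w l = (1 : Matrix ι ι ℝ) k l :=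
  householder_dotProduct_householder (normalizeNonposAt_sub_single_dotProduct_self_ne_zero i w) k l

theorem span_range_householderToward (i : ι) (w : ι → ℝ) :
    Submodule.span ℝ (Set.range (householderToward i w)) = ⊤ :=
  span_range_householder (normalizeNonposAt_sub_single_dotProduct_self_ne_zero i w)

theorem Matrix.IsSymm.mulVec_householderToward_row {A : Matrix ι ι ℝ} (hA : A.IsSymm)
    (hr : A.rank ≤ 1) {j : ι} (hj : A j j ≠ 0 ∨ A = 0) (i k : ι) :
    A *ᵥ householderToward i (A j) k =
      (Pi.single i A.trace : ι → ℝ) k • householderToward i (A j) k := by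
  obtain hj | rfl := hj
  swap
  · simp
  have hw : A j ≠ 0 := fun h => hj (congrFun h j)
  have hc : (if 0 < A j i then -1 else 1 : ℝ) / √(A j ⬝ᵥ A j) ≠ 0 :=
    div_ne_zero (by split_ifs <;> norm_num)
      (Real.sqrt_ne_zero'.2 (dotProduct_self_star_pos_iff.2 hw))
  refine mulVec_householder_sub_single (normalizeNonposAt_dotProduct_self hw i)
    ((normalizeNonposAt_apply_self_nonpos i _).trans_lt one_pos).ne ?_ (fun u hu => ?_) k
  · rw [normalizeNonposAt, mulVec_smul, hA.mulVec_row hr hj, smul_comm]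
  · rw [normalizeNonposAt, smul_dotProduct, smul_eq_mul] at hu
    exact hA.mulVec_eq_zero_of_dotProduct_row hr hj ((mul_eq_zero.1 hu).resolve_left hc)

theorem measurable_householder_apply (k l : ι) :
    Measurable fun q : ι → ℝ => householder q k l := by
  have hdot : Measurable fun q : ι → ℝ => q ⬝ᵥ q := by simp only [dotProduct]; fun_prop
  simp only [householder, Matrix.sub_apply, Matrix.smul_apply, vecMulVec_apply, smul_eq_mul]
  fun_prop

theorem measurable_householderToward_apply (i k l : ι) :
    Measurable fun w : ι → ℝ => householderToward i w k l :=
  (measurable_householder_apply k l).comp ((measurable_normalizeNonposAt i).sub_const _)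

end Real

theorem measurable_fin_find {Ω : Type*} [MeasurableSpace Ω] {n : ℕ} {p : Ω → Fin n → Prop}
    [∀ x, DecidablePred (p x)] (h : ∀ x, ∃ k, p x k) (hp : ∀ k, MeasurableSet {x | p x k}) :
    Measurable fun x => Fin.find (p x) (h x) := by
  refine measurable_to_countable' fun j => ?_
  convert (hp j).inter (.iInter fun k => .iInter fun (_ : k < j) => (hp k).compl) using 1
  ext x
  simp [Fin.find_eq_iff]

theorem Measurable.apply_index {Ω ι β : Type*} [MeasurableSpace Ω] [MeasurableSpace ι]
    [MeasurableSpace β] [Countable ι] [MeasurableSingletonClass ι] {p : Ω → ι}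
    (hp : Measurable p) {f : ι → Ω → β} (hf : ∀ i, Measurable (f i)) :
    Measurable fun x => f (p x) x :=
  (measurable_from_prod_countable_left (f := fun y : Ω × ι => f y.2 y.1) hf).comp
    (measurable_id.prodMk hp)

section DiagPivot

variable {α : Type*} [Zero α] [DecidableEq α] {n : ℕ} [NeZero n]

theorem exists_diag_ne_zero_or_forall_diag_eq_zero (B : Matrix (Fin n) (Fin n) α) :
    ∃ k, B k k ≠ 0 ∨ ∀ l, B l l = 0 := by
  by_cases h : ∀ l, B l l = 0
  exacts [⟨0, .inr h⟩, (not_forall.1 h).imp fun _ => .inl]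

/-- The first index with a nonzero diagonal entry, or `0` if the diagonal vanishes. -/
noncomputable def diagPivot (B : Matrix (Fin n) (Fin n) α) : Fin n :=
  Fin.find _ (exists_diag_ne_zero_or_forall_diag_eq_zero B)

theorem Matrix.IsSymm.diag_diagPivot_ne_zero_or_eq_zero {K : Type*} [Field K] [LinearOrder K]
    [IsStrictOrderedRing K] {B : Matrix (Fin n) (Fin n) K} (hB : B.IsSymm) (hr : B.rank ≤ 1) :
    B (diagPivot B) (diagPivot B) ≠ 0 ∨ B = 0 :=
  (Fin.find_spec (exists_diag_ne_zero_or_forall_diag_eq_zero B)).imp_right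
    (hB.eq_zero_of_diag_eq_zero hr)

theorem measurable_diagPivot {Ω : Type*} [MeasurableSpace Ω] [MeasurableSpace α]
    [MeasurableSingletonClass α] {A : Ω → Matrix (Fin n) (Fin n) α}
    (hA : ∀ i, Measurable fun x => A x i i) : Measurable fun x => diagPivot (A x) :=
  measurable_fin_find _ fun k => by
    rw [Set.ofPred_or, Set.ofPred_forall]
    exact (hA k (measurableSet_singleton 0)).compl.union
      (.iInter fun l => hA l (measurableSet_singleton 0))

end DiagPivot

section PiSingle

variable {ι α : Type*} [PartialOrder ι] [DecidableEq ι] [Preorder α] [Zero α] {t : α}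

theorem monotone_single_bot [OrderBot ι] (ht : t ≤ 0) : Monotone (Pi.single (⊥ : ι) t) := by
  intro a b hab
  by_cases hb : b = ⊥
  · obtain rfl : a = ⊥ := le_bot_iff.1 (hb ▸ hab)
    rw [hb]
  · by_cases ha : a = ⊥
    · simp [ha, hb, ht]
    · simp [ha, hb]

theorem monotone_single_top [OrderTop ι] (ht : 0 ≤ t) : Monotone (Pi.single (⊤ : ι) t) := by
  intro a b hab
  by_cases ha : a = ⊤
  · obtain rfl : b = ⊤ := top_le_iff.1 (ha ▸ hab)
    rw [ha]
  · by_cases hb : b = ⊤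
    · simp [hb, ha, ht]
    · simp [ha, hb]

end PiSingle

theorem rank_le_one_random_symmetric_measurable_spectral_decomposition_general
    {Ω : Type*} [MeasurableSpace Ω]
    (n : ℕ) (A : Ω → Matrix (Fin n) (Fin n) ℝ)
    (hmeas : ∀ i j, Measurable fun x => A x i j)
    (hsymm : ∀ x, (A x).IsSymm)
    (hrank : ∀ x, (A x).rank ≤ 1) :
    ∃ (lam : Fin n → Ω → ℝ) (u : Fin n → Ω → (Fin n → ℝ)),
      (∀ j, Measurable (lam j)) ∧
      (∀ (j : Fin n) (k : Fin n), Measurable fun x => u j x k) ∧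
      (∀ x, Monotone fun j => lam j x) ∧
      (∀ x, (∀ i j : Fin n, u i x ⬝ᵥ u j x = if i = j then (1 : ℝ) else 0) ∧
        Submodule.span ℝ (Set.range fun i => u i x) = ⊤) ∧
      (∀ x (j : Fin n), A x *ᵥ u j x = lam j x • u j x) := by
  cases n with
  | zero =>
    exact ⟨0, 0, finZeroElim, finZeroElim, fun _ => Subsingleton.monotone _,
      fun _ => ⟨finZeroElim, Subsingleton.elim _ _⟩, fun _ => finZeroElim⟩
  | succ m =>
    have htrace : Measurable fun x => (A x).trace := by simp only [trace, diag]; fun_prop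
    let target x : Fin (m + 1) := if (A x).trace < 0 then ⊥ else ⊤
    have htarget : Measurable target :=
      .ite (measurableSet_lt htrace measurable_const) measurable_const measurable_const
    refine ⟨fun j x => (Pi.single (target x) (A x).trace : Fin (m + 1) → ℝ) j,
      fun j x => householderToward (target x) (A x (diagPivot (A x))) j, fun j => ?_,
      fun j k => ?_, fun x => ?_,
      fun x => ⟨householderToward_dotProduct _ _, span_range_householderToward _ _⟩,
      fun x j => (hsymm x).mulVec_householderToward_row (hrank x)
        ((hsymm x).diag_diagPivot_ne_zero_or_eq_zero (hrank x)) _ j⟩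
    · refine htarget.apply_index (f := fun i x => (Pi.single i (A x).trace : Fin (m + 1) → ℝ) j)
        fun i => ?_
      simp only [Pi.single_apply]
      exact Measurable.ite (.const _) htrace measurable_const
    · exact (htarget.prodMk (measurable_diagPivot fun i => hmeas i i)).apply_index
        (f := fun p x => householderToward p.1 (A x p.2) j k) fun p =>
        (measurable_householderToward_apply p.1 j k).comp (measurable_pi_lambda _ (hmeas p.2))
    · dsimp only [target]
      split_ifs with h
      exacts [monotone_single_bot h.le, monotone_single_top (not_lt.1 h)]

/-- A random real symmetric matrix of rank at most one admits measurable ordered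
eigenvalue functions and measurable eigenvector functions forming a pointwise orthonormal basis. -/
theorem rank_le_one_random_symmetric_measurable_spectral_decomposition
    {Ω : Type*} [MeasurableSpace Ω] (μ : Measure Ω) [SigmaFinite μ]
    (n : ℕ) (A : Ω → Matrix (Fin n) (Fin n) ℝ)
    (hmeas : ∀ i j, Measurable fun x => A x i j)
    (hsymm : ∀ x, (A x).IsSymm)
    (hrank : ∀ x, (A x).rank ≤ 1) :
    ∃ (lam : Fin n → Ω → ℝ) (u : Fin n → Ω → (Fin n → ℝ)),
      (∀ j, Measurable (lam j)) ∧
      (∀ (j : Fin n) (k : Fin n), Measurable fun x => u j x k) ∧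
      (∀ x, Monotone fun j => lam j x) ∧
      (∀ x, (∀ i j : Fin n, u i x ⬝ᵥ u j x = if i = j then (1 : ℝ) else 0) ∧
        Submodule.span ℝ (Set.range fun i => u i x) = ⊤) ∧
      (∀ x (j : Fin n), A x *ᵥ u j x = lam j x • u j x) :=
  rank_le_one_random_symmetric_measurable_spectral_decomposition_general n A hmeas hsymm hrank
end

section
/- Let (Ω, μ) be a probability space and let A : Ω → B(L²(S¹)) be a random linear operator with matrix coefficients a_{ij}(ω) = ⟨A(ω) e_j, e_i⟩ for i, j ∈ ℤ. Then A is a random Laurent operator — i.e., there exists a product-measurable φ : Ω × S¹ → ℂ with each φ_ω := φ(ω, ·) essentially bounded such that A(ω) f = φ_ω f for all f ∈ L²(S¹) and ω ∈ Ω — if and only if a_{i+1, j+1}(ω) = a_{ij}(ω) for all i, j ∈ ℤ and all ω ∈ Ω. -/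
open MeasureTheory AddCircle

instance : Fact (0 < 2 * Real.pi) := ⟨by positivity⟩

local notation "S¹" => AddCircle (2 * Real.pi)
local notation "μS" =>
  (AddCircle.haarAddCircle : MeasureTheory.Measure (AddCircle (2 * Real.pi)))

/-!
If `A ω` is multiplication by `φ_ω`, then `⟨A ω e_j, e_i⟩` is the conjugate of the
`(i - j)`-th Fourier coefficient of `φ_ω`, which only depends on `i - j`.

Conversely, constant diagonals say that `A ω e_n` and `e_n · A ω e_0` have the same Fourier
coefficients, so `A ω f = (A ω e_0) · f` holds for trigonometric polynomials `f`; it holds for all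
`f` because the `f` satisfying it form a closed subspace (pass to a.e. convergent subsequences).
Testing against indicator functions of `{‖A ω e_0‖ ≥ c}` bounds `‖A ω e_0‖` by `‖A ω‖` a.e.
A jointly measurable version of `ω ↦ A ω e_0` is the pointwise limit of partial Fourier sums whose
lengths are chosen measurably in `ω` so that the `L²` errors are at most `2⁻ᵏ`; summable errors
force a.e. convergence.
-/

open Filter Topology
open scoped ComplexConjugate

theorem apply_eq_apply_sub_zero_of_const_diag {β : Type*} (a : ℤ → ℤ → β)
    (ha : ∀ i j, a (i + 1) (j + 1) = a i j) (i j : ℤ) : a i j = a (i - j) 0 := by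
  induction j using Int.induction_on generalizing i with
  | zero => simp
  | succ j ih =>
    have h := ha (i - 1) j
    rw [sub_add_cancel] at h
    rw [h, ih, sub_sub, add_comm (1 : ℤ)]
  | pred j ih => rw [← ha, sub_add_cancel, ih, sub_sub_eq_add_sub, sub_neg_eq_add]

namespace MeasureTheory.Lp

variable {α : Type*} [MeasurableSpace α] {μ : Measure α} {p : ENNReal}

section NormedSpace

variable {𝕜 E : Type*} [NormedField 𝕜] [NormedAddCommGroup E] [NormedSpace 𝕜 E]

theorem coeFn_finset_sum {ι : Type*} (s : Finset ι) (f : ι → Lp E p μ) :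
    ⇑(∑ i ∈ s, f i) =ᵐ[μ] ∑ i ∈ s, ⇑(f i) := by
  classical
  induction s using Finset.induction with
  | empty => simpa using coeFn_zero E p μ
  | insert a s ha ih =>
    simp only [Finset.sum_insert ha]
    exact (coeFn_add _ _).trans (EventuallyEq.rfl.add ih)

variable [Fact (1 ≤ p)]

def multiplierSubmodule (L : Lp E p μ →L[𝕜] Lp E p μ) (g : α → 𝕜) : Submodule 𝕜 (Lp E p μ) where
  carrier := {f | L f =ᵐ[μ] fun x => g x • f x}
  zero_mem' := by
    simp only [Set.mem_ofPred_eq, map_zero]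
    filter_upwards [coeFn_zero E p μ] with x hx
    rw [hx, Pi.zero_apply, smul_zero]
  add_mem' {f₁ f₂} h₁ h₂ := by
    simp only [Set.mem_ofPred_eq, map_add] at *
    filter_upwards [coeFn_add (L f₁) (L f₂), coeFn_add f₁ f₂, h₁, h₂] with x h h' h₁ h₂
    rw [h, h', Pi.add_apply, Pi.add_apply, h₁, h₂, smul_add]
  smul_mem' c f h := by
    simp only [Set.mem_ofPred_eq, map_smul] at *
    filter_upwards [coeFn_smul c (L f), coeFn_smul c f, h] with x h h' h₁
    rw [h, h', Pi.smul_apply, Pi.smul_apply, h₁, smul_comm]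

theorem isClosed_multiplierSubmodule (L : Lp E p μ →L[𝕜] Lp E p μ) (g : α → 𝕜) :
    IsClosed (multiplierSubmodule L g : Set (Lp E p μ)) := by
  refine isClosed_of_closure_subset fun f hf => ?_
  obtain ⟨u, hu, hlim⟩ := mem_closure_iff_seq_limit.1 hf
  obtain ⟨ns, hns, hu_ae⟩ := (tendstoInMeasure_of_tendsto_Lp hlim).exists_seq_tendsto_ae
  have hLu := (L.continuous.tendsto f).comp (hlim.comp hns.tendsto_atTop)
  obtain ⟨ms, hms, hLu_ae⟩ := (tendstoInMeasure_of_tendsto_Lp hLu).exists_seq_tendsto_ae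
  have hu_mul : ∀ᵐ x ∂μ, ∀ k, L (u k) x = g x • u k x := ae_all_iff.2 fun k => hu k
  filter_upwards [hu_ae, hLu_ae, hu_mul] with x hx hLx hx_mul
  refine tendsto_nhds_unique hLx ?_
  simp only [Function.comp_apply, hx_mul]
  exact (hx.comp hms.tendsto_atTop).const_smul (g x)

end NormedSpace

variable {𝕜 : Type*} [RCLike 𝕜] [Fact (1 ≤ p)]

theorem ae_lt_of_opNorm_lt [IsFiniteMeasure μ] (hp₀ : p ≠ 0) (hp : p ≠ ⊤)
    (L : Lp 𝕜 p μ →L[𝕜] Lp 𝕜 p μ) {g : α → 𝕜} (hg : StronglyMeasurable g)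
    (hL : ∀ f, f ∈ multiplierSubmodule L g) {c : ℝ} (hc : ‖L‖ < c) :
    ∀ᵐ x ∂μ, ‖g x‖ < c := by
  set E := {x | c ≤ ‖g x‖}
  have hE : MeasurableSet E := measurableSet_le measurable_const hg.norm.measurable
  set f := indicatorConstLp p hE (measure_ne_top μ E) (1 : 𝕜)
  have hcf : ‖(c : 𝕜) • f‖ ≤ ‖L f‖ := by
    refine norm_le_norm_of_ae_le ?_
    filter_upwards [coeFn_smul (c : 𝕜) f, indicatorConstLp_coeFn (hs := hE)
      (hμs := measure_ne_top μ E) (c := (1 : 𝕜)), hL f] with x h₁ h₂ h₃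
    rw [h₁, h₃, Pi.smul_apply, h₂]
    by_cases hx : x ∈ E
    · have hx' : c ≤ ‖g x‖ := hx
      simpa [Set.indicator_of_mem hx, abs_of_pos ((norm_nonneg L).trans_lt hc)] using hx'
    · simp [Set.indicator_of_notMem hx]
  have hf : ‖f‖ = 0 := by
    have := hcf.trans (L.le_opNorm f)
    rw [norm_smul, RCLike.norm_ofReal, abs_of_pos ((norm_nonneg L).trans_lt hc)] at this
    nlinarith [norm_nonneg f, norm_nonneg L]
  rw [norm_indicatorConstLp hp₀ hp, norm_one, one_mul, one_div, Real.rpow_eq_zero measureReal_nonneg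
    (inv_ne_zero (ENNReal.toReal_ne_zero.2 ⟨hp₀, hp⟩)), measureReal_eq_zero_iff] at hf
  rw [ae_iff]
  simpa only [not_lt] using hf

theorem ae_norm_le_opNorm [IsFiniteMeasure μ] (hp₀ : p ≠ 0) (hp : p ≠ ⊤)
    (L : Lp 𝕜 p μ →L[𝕜] Lp 𝕜 p μ) {g : α → 𝕜} (hg : StronglyMeasurable g)
    (hL : ∀ f, f ∈ multiplierSubmodule L g) : ∀ᵐ x ∂μ, ‖g x‖ ≤ ‖L‖ := by
  have hlt : ∀ᵐ x ∂μ, ∀ k : ℕ, ‖g x‖ < ‖L‖ + 1 / (k + 1) := ae_all_iff.2 fun k =>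
    ae_lt_of_opNorm_lt hp₀ hp L hg hL (lt_add_of_pos_right _ Nat.one_div_pos_of_nat)
  filter_upwards [hlt] with x hx
  simpa using ge_of_tendsto' (tendsto_const_nhds.add tendsto_one_div_add_atTop_nhds_zero_nat)
    fun k => (hx k).le

end MeasureTheory.Lp

namespace AddCircle

variable {T : ℝ} [Fact (0 < T)]

theorem fourierCoeff_fourier_mul (f : AddCircle T → ℂ) (n m : ℤ) :
    fourierCoeff (fun x => fourier n x * f x) m = fourierCoeff f (m - n) := by
  simp only [fourierCoeff, smul_eq_mul, ← mul_assoc, ← fourier_add, show -m + n = -(m - n) by ring]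

theorem fourierCoeff_eq_inner (f : Lp ℂ 2 (haarAddCircle (T := T))) (n : ℤ) :
    fourierCoeff f n = inner ℂ (fourierLp 2 n) f := by
  rw [← fourierBasis_repr, fourierBasis.repr_apply_apply, coe_fourierBasis]

theorem memLp_fourier_mul {p : ENNReal} {g : AddCircle T → ℂ} (hg : MemLp g p haarAddCircle)
    (n : ℤ) : MemLp (fun x => fourier n x * g x) p haarAddCircle :=
  hg.of_le ((map_continuous _).aestronglyMeasurable.mul hg.1) <| .of_forall fun x => by
    rw [norm_mul, fourier_apply, Circle.norm_coe, one_mul]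

theorem ae_eq_of_fourierCoeff_eq {f g : AddCircle T → ℂ} (hf : MemLp f 2 haarAddCircle)
    (hg : MemLp g 2 haarAddCircle) (h : fourierCoeff f = fourierCoeff g) :
    f =ᵐ[haarAddCircle] g := by
  have hfg : hf.toLp f = hg.toLp g := fourierBasis.repr.injective <| lp.ext <| funext fun n => by
    simp only [fourierBasis_repr, fourierCoeff_congr_ae hf.coeFn_toLp,
      fourierCoeff_congr_ae hg.coeFn_toLp, h]
  exact hf.coeFn_toLp.symm.trans (hfg ▸ hg.coeFn_toLp)

theorem multiplierSubmodule_eq_top_of_fourierLp_mem {p : ENNReal} [Fact (1 ≤ p)] (hp : p ≠ ⊤)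
    (L : Lp ℂ p (haarAddCircle (T := T)) →L[ℂ] Lp ℂ p (haarAddCircle (T := T)))
    {g : AddCircle T → ℂ} (h : ∀ n, fourierLp p n ∈ Lp.multiplierSubmodule L g) :
    Lp.multiplierSubmodule L g = ⊤ := by
  refine eq_top_iff.2 ?_
  rw [← span_fourierLp_closure_eq_top hp]
  exact Submodule.topologicalClosure_minimal _ (Submodule.span_le.2 (Set.range_subset_iff.2 h))
    (Lp.isClosed_multiplierSubmodule L g)

variable (L : Lp ℂ 2 (haarAddCircle (T := T)) →L[ℂ] Lp ℂ 2 (haarAddCircle (T := T)))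

def HasConstantDiagonals : Prop :=
  ∀ i j : ℤ, inner ℂ (L (fourierLp 2 (j + 1))) (fourierLp 2 (i + 1)) =
    inner ℂ (L (fourierLp 2 j)) (fourierLp 2 i)

variable {L}

theorem inner_apply_fourierLp_eq_conj_fourierCoeff {φ : AddCircle T → ℂ} {j : ℤ}
    (hj : L (fourierLp 2 j) =ᵐ[haarAddCircle] fun z => φ z * fourierLp 2 j z) (i : ℤ) :
    inner ℂ (L (fourierLp 2 j)) (fourierLp 2 i) = conj (fourierCoeff φ (i - j)) := by
  have hj' : L (fourierLp 2 j) =ᵐ[haarAddCircle] fun z => fourier j z * φ z := by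
    filter_upwards [hj, coeFn_fourierLp 2 j] with z h₁ h₂
    rw [h₁, h₂, mul_comm]
  rw [← inner_conj_symm, ← fourierCoeff_eq_inner, fourierCoeff_congr_ae hj',
    fourierCoeff_fourier_mul]

theorem HasConstantDiagonals.coeFn_apply_fourierLp (hL : HasConstantDiagonals L) (n : ℤ) :
    L (fourierLp 2 n) =ᵐ[haarAddCircle] fun z => fourier n z * L (fourierLp 2 0) z := by
  refine ae_eq_of_fourierCoeff_eq (Lp.memLp _) (memLp_fourier_mul (Lp.memLp _) n)
    (funext fun m => ?_)
  have := apply_eq_apply_sub_zero_of_const_diag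
    (fun i j => inner ℂ (L (fourierLp 2 j)) (fourierLp 2 i)) hL m n
  rw [fourierCoeff_fourier_mul, fourierCoeff_eq_inner, fourierCoeff_eq_inner, ← inner_conj_symm,
    this, inner_conj_symm]

theorem HasConstantDiagonals.mem_multiplierSubmodule (hL : HasConstantDiagonals L)
    (f : Lp ℂ 2 (haarAddCircle (T := T))) :
    f ∈ Lp.multiplierSubmodule L (L (fourierLp 2 0)) := by
  rw [multiplierSubmodule_eq_top_of_fourierLp_mem (by simp) L fun n => ?_]
  · exact Submodule.mem_top
  filter_upwards [hL.coeFn_apply_fourierLp n, coeFn_fourierLp 2 n] with z h₁ h₂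
  rw [h₁, h₂, smul_eq_mul, mul_comm]

end AddCircle

section MeasurableVersion

variable {Ω X E : Type*} [MeasurableSpace Ω] [MeasurableSpace X] {ν : Measure X}
  [NormedAddCommGroup E]

theorem ae_tendsto_of_tsum_eLpNorm_sub_ne_top {f : ℕ → X → E} {g : X → E}
    (hf : ∀ k, AEStronglyMeasurable (f k) ν) (hg : AEStronglyMeasurable g ν)
    (h : ∑' k, eLpNorm (f k - g) 1 ν ≠ ⊤) :
    ∀ᵐ x ∂ν, Tendsto (fun k => f k x) atTop (𝓝 (g x)) := by
  have hmeas : ∀ k, AEMeasurable (fun x => ‖f k x - g x‖ₑ) ν := fun k => ((hf k).sub hg).enorm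
  have hsum : ∀ᵐ x ∂ν, ∑' k, ‖f k x - g x‖ₑ < ⊤ := by
    refine ae_lt_top' (AEMeasurable.tsum hmeas) ?_
    simpa only [lintegral_tsum hmeas, eLpNorm_one_eq_lintegral_enorm, Pi.sub_apply] using h
  filter_upwards [hsum] with x hx
  refine tendsto_iff_edist_tendsto_0.2 ?_
  simpa only [edist_eq_enorm_sub] using ENNReal.tendsto_atTop_zero_of_tsum_ne_top hx.ne

variable [CompleteSpace E] [MeasurableSpace E] [BorelSpace E] [SecondCountableTopology E]

theorem exists_measurable_uncurry_ae_eq [IsProbabilityMeasure ν] {p : ENNReal} [Fact (1 ≤ p)]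
    {F : Ω → Lp E p ν} {G : ℕ → Ω → Lp E p ν} (hG : ∀ N, StronglyMeasurable (G N))
    (hGF : ∀ ω, Tendsto (fun N => G N ω) atTop (𝓝 (F ω))) {v : ℕ → Ω × X → E}
    (hv : ∀ N, Measurable (v N)) (hvG : ∀ N ω, (fun x => v N (ω, x)) =ᵐ[ν] G N ω) :
    ∃ φ : Ω × X → E, Measurable φ ∧ ∀ ω, (fun x => φ (ω, x)) =ᵐ[ν] F ω := by
  classical
  have hF : StronglyMeasurable F := stronglyMeasurable_of_tendsto _ hG (tendsto_pi_nhds.2 hGF)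
  have hex : ∀ (k : ℕ) ω, ∃ N, ‖G N ω - F ω‖ ≤ (1 / 2) ^ k := fun k ω =>
    ((tendsto_iff_norm_sub_tendsto_zero.1 (hGF ω)).eventually_le_const (by positivity)).exists
  set u : ℕ → Ω × X → E := fun k q => v (Nat.find (hex k q.1)) q
  have hu : ∀ k, Measurable (u k) := fun k => Measurable.find hv
    (fun N => measurableSet_le (((hG N).sub hF).norm.measurable.comp measurable_fst)
      measurable_const) fun q => hex k q.1
  have hu_close : ∀ ω k,
      eLpNorm (fun x => u k (ω, x) - F ω x) 1 ν ≤ ENNReal.ofReal ((1 / 2) ^ k) := by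
    intro ω k
    set N := Nat.find (hex k ω)
    have hvF : (fun x => u k (ω, x) - F ω x) =ᵐ[ν] ⇑(G N ω - F ω) := by
      filter_upwards [hvG N ω, Lp.coeFn_sub (G N ω) (F ω)] with x h₁ h₂
      rw [h₂, Pi.sub_apply, ← h₁]
    calc eLpNorm (fun x => u k (ω, x) - F ω x) 1 ν
        ≤ eLpNorm (fun x => u k (ω, x) - F ω x) p ν :=
          eLpNorm_le_eLpNorm_of_exponent_le Fact.out ((Lp.aestronglyMeasurable _).congr hvF.symm)
      _ = ENNReal.ofReal ‖G N ω - F ω‖ := by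
          rw [eLpNorm_congr_ae hvF, Lp.norm_def, ENNReal.ofReal_toReal (Lp.eLpNorm_ne_top _)]
      _ ≤ ENNReal.ofReal ((1 / 2) ^ k) := ENNReal.ofReal_le_ofReal (Nat.find_spec (hex k ω))
  have hu_lim : ∀ ω, ∀ᵐ x ∂ν, Tendsto (fun k => u k (ω, x)) atTop (𝓝 (F ω x)) := fun ω =>
    ae_tendsto_of_tsum_eLpNorm_sub_ne_top
      (fun k => ((hu k).comp measurable_prodMk_left).aestronglyMeasurable)
      (Lp.aestronglyMeasurable _)
      (ne_top_of_le_ne_top ENNReal.ofReal_ne_top <|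
        (ENNReal.tsum_le_tsum (hu_close ω)).trans_eq
          (ENNReal.ofReal_tsum_of_nonneg (fun k => by positivity) summable_geometric_two).symm)
  refine ⟨fun q => limUnder atTop (fun k => u k q),
    (StronglyMeasurable.limUnder fun k => (hu k).stronglyMeasurable).measurable, fun ω => ?_⟩
  filter_upwards [hu_lim ω] with x hx
  exact hx.limUnder_eq

theorem exists_measurable_uncurry_ae_eq_of_hilbertBasis {𝕜 : Type*} [RCLike 𝕜]
    [IsProbabilityMeasure ν] {ι : Type*} [Countable ι] (b : HilbertBasis ι 𝕜 (Lp 𝕜 2 ν))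
    {F : Ω → Lp 𝕜 2 ν} (hF : ∀ i, Measurable fun ω => inner 𝕜 (b i) (F ω)) :
    ∃ φ : Ω × X → 𝕜, Measurable φ ∧ ∀ ω, (fun x => φ (ω, x)) =ᵐ[ν] F ω := by
  obtain ⟨s, hs⟩ := (atTop : Filter (Finset ι)).exists_seq_tendsto
  refine exists_measurable_uncurry_ae_eq
    (G := fun N ω => ∑ i ∈ s N, inner 𝕜 (b i) (F ω) • b i)
    (fun N => Finset.stronglyMeasurable_fun_sum _ fun i _ => (hF i).stronglyMeasurable.smul_const _)
    (fun ω => by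
      simpa only [b.repr_apply_apply, Function.comp_def] using (b.hasSum_repr (F ω)).comp hs)
    (v := fun N q => ∑ i ∈ s N, inner 𝕜 (b i) (F q.1) * b i q.2)
    (fun N => Finset.measurable_fun_sum _ fun i _ => ((hF i).comp measurable_fst).mul
      ((Lp.stronglyMeasurable (b i)).measurable.comp measurable_snd))
    fun N ω => ?_
  filter_upwards [Lp.coeFn_finset_sum (s N) fun i => inner 𝕜 (b i) (F ω) • b i,
    ae_all_iff.2 fun i => Lp.coeFn_smul (inner 𝕜 (b i) (F ω)) (b i)] with x h₁ h₂
  simp only [h₁, Finset.sum_apply, h₂, Pi.smul_apply, smul_eq_mul]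

end MeasurableVersion

theorem random_laurent_iff_constant_diagonals_general
    {Ω : Type*} [MeasurableSpace Ω]
    (A : Ω → (Lp ℂ 2 μS →L[ℂ] Lp ℂ 2 μS))
    (hA : ∀ f g : Lp ℂ 2 μS, Measurable fun ω => (inner ℂ (A ω f) g : ℂ)) :
    (∃ φ : Ω × S¹ → ℂ, Measurable φ ∧
      (∀ ω, ∃ C : ℝ, ∀ᵐ z ∂μS, ‖φ (ω, z)‖ ≤ C) ∧
      ∀ ω (f : Lp ℂ 2 μS), (A ω f : S¹ → ℂ) =ᵐ[μS] fun z => φ (ω, z) * f z) ↔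
    (∀ (i j : ℤ) (ω : Ω),
      (inner ℂ (A ω (fourierLp 2 (j + 1))) (fourierLp 2 (i + 1)) : ℂ) =
      (inner ℂ (A ω (fourierLp 2 j)) (fourierLp 2 i) : ℂ)) := by
  constructor
  · rintro ⟨φ, -, -, hφ⟩ i j ω
    rw [inner_apply_fourierLp_eq_conj_fourierCoeff (hφ ω _),
      inner_apply_fourierLp_eq_conj_fourierCoeff (hφ ω _), add_sub_add_right_eq_sub]
  · intro hdiag
    have hmul : ∀ ω f, f ∈ Lp.multiplierSubmodule (A ω) (A ω (fourierLp 2 0)) := fun ω =>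
      HasConstantDiagonals.mem_multiplierSubmodule fun i j => hdiag i j ω
    obtain ⟨φ, hφ, hφA⟩ := exists_measurable_uncurry_ae_eq_of_hilbertBasis fourierBasis
      (F := fun ω => A ω (fourierLp 2 0)) fun n => by
        simp only [coe_fourierBasis, ← inner_conj_symm (fourierLp 2 n)]
        exact RCLike.continuous_conj.measurable.comp (hA _ _)
    refine ⟨φ, hφ, fun ω => ⟨‖A ω‖, ?_⟩, fun ω f => ?_⟩
    · filter_upwards [hφA ω, Lp.ae_norm_le_opNorm two_ne_zero ENNReal.ofNat_ne_top (A ω)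
        (Lp.stronglyMeasurable _) (hmul ω)] with z h₁ h₂
      rwa [h₁]
    · filter_upwards [hmul ω f, hφA ω] with z h₁ h₂
      rw [h₁, h₂, smul_eq_mul]

/-- A random linear operator `A : Ω → B(L²(S¹))` is a random Laurent operator
(multiplication by a product-measurable `φ` with each `φ_ω` essentially bounded) if and only if
its matrix coefficients `a_{ij}(ω) = ⟨A(ω) e_j, e_i⟩` satisfy `a_{i+1,j+1} = a_{ij}` for all
`i, j ∈ ℤ` and all `ω`. -/
theorem random_laurent_iff_constant_diagonals
    {Ω : Type*} [MeasurableSpace Ω] (μ : Measure Ω) [IsProbabilityMeasure μ]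
    (A : Ω → (Lp ℂ 2 μS →L[ℂ] Lp ℂ 2 μS))
    (hA : ∀ f g : Lp ℂ 2 μS, Measurable fun ω => (inner ℂ (A ω f) g : ℂ)) :
    (∃ φ : Ω × S¹ → ℂ, Measurable φ ∧
      (∀ ω, ∃ C : ℝ, ∀ᵐ z ∂μS, ‖φ (ω, z)‖ ≤ C) ∧
      ∀ ω (f : Lp ℂ 2 μS), (A ω f : S¹ → ℂ) =ᵐ[μS] fun z => φ (ω, z) * f z) ↔
    (∀ (i j : ℤ) (ω : Ω),
      (inner ℂ (A ω (fourierLp 2 (j + 1))) (fourierLp 2 (i + 1)) : ℂ) =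
      (inner ℂ (A ω (fourierLp 2 j)) (fourierLp 2 i) : ℂ)) :=
  random_laurent_iff_constant_diagonals_general A hA
end
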